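/- arXiv:math/0508224 — 5 statements merged into one kernel-verified Lean document; each statement's English description precedes it below -/
import Mathlib

section
/- Let ν be a Beurling weight increasing on ℤ₊, let h ∈ A_1 (the Wiener algebra) with P_-(h) ∈ A_ν^-, and let g ∈ A_1^+. Then P_-(g·h) ∈ A_ν^-, and moreover ‖P_-(gh)‖_ν ≤ ‖P_-(h)‖_ν · ‖g‖_1. -/
/-- Projection lemma: if `h ∈ A_1` with `P_-(h) ∈ A_ν^-` and `g ∈ A_1^+`,
then `P_-(g·h) ∈ A_ν^-` with `‖P_-(gh)‖_ν ≤ ‖P_-(h)‖_ν ‖g‖_1`.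
The coefficient of `z^{-i}` (`i ≥ 0`) in `g·h` is `Σ_{n≥0} g_n h_{-n-i}`. -/
theorem projMinus_mul_wiener_plus (ν : ℤ → ℝ)
    (hν0 : ν 0 = 1)
    (hν1 : ∀ n : ℤ, 1 ≤ ν n)
    (hνsym : ∀ n : ℤ, ν (-n) = ν n)
    (hνsub : ∀ n m : ℤ, ν (n + m) ≤ ν n * ν m)
    (hνmono : ∀ n m : ℤ, 0 ≤ n → n ≤ m → ν n ≤ ν m)
    (h : ℤ → ℂ)
    (hh : Summable fun k : ℤ => ‖h k‖)
    (hhm : Summable fun i : ℕ => ν (i : ℤ) * ‖h (-(i : ℤ))‖)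
    (g : ℕ → ℂ)
    (hg : Summable fun n : ℕ => ‖g n‖) :
    Summable (fun i : ℕ => ν (i : ℤ) * ‖∑' n : ℕ, g n * h (-(n : ℤ) - (i : ℤ))‖) ∧
      (∑' i : ℕ, ν (i : ℤ) * ‖∑' n : ℕ, g n * h (-(n : ℤ) - (i : ℤ))‖) ≤
        (∑' i : ℕ, ν (i : ℤ) * ‖h (-(i : ℤ))‖) * ∑' n : ℕ, ‖g n‖ := by
  set a : ℕ → ℝ := fun m => ν (m : ℤ) * ‖h (-(m : ℤ))‖ with ha
  have hν0' : ∀ n : ℤ, 0 ≤ ν n := fun n => le_trans zero_le_one (hν1 n)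
  have ha0 : ∀ m, 0 ≤ a m := fun m => mul_nonneg (hν0' _) (norm_nonneg _)
  -- product summability
  have hF0 : Summable (fun p : ℕ × ℕ => ‖g p.1‖ * a p.2) :=
    hg.mul_of_nonneg hhm (fun _ => norm_nonneg _) ha0
  set F : ℕ × ℕ → ℝ := fun p => ‖g p.1‖ * a (p.1 + p.2) with hFdef
  have hinj : Function.Injective (fun p : ℕ × ℕ => (p.1, p.1 + p.2)) := by
    intro p q hpq
    simp only [Prod.mk.injEq] at hpq
    obtain ⟨h1, h2⟩ := hpq
    exact Prod.ext h1 (by omega)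
  have hF : Summable F := by
    have := hF0.comp_injective hinj
    exact this
  have hF0nn : ∀ p : ℕ × ℕ, 0 ≤ F p := fun p => mul_nonneg (norm_nonneg _) (ha0 _)
  -- index identity
  have hidx : ∀ n i : ℕ, -(n : ℤ) - (i : ℤ) = -((n + i : ℕ) : ℤ) := by
    intro n i; push_cast; ring
  -- inner summability
  have hinner : ∀ i : ℕ, Summable fun n : ℕ => ‖g n * h (-(n : ℤ) - (i : ℤ))‖ := by
    intro i
    apply Summable.of_nonneg_of_le (fun n => norm_nonneg _) (fun n => ?_) (hF.prod_symm.prod_factor i)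
    rw [norm_mul, hidx n i]
    calc ‖g n‖ * ‖h (-((n + i : ℕ) : ℤ))‖
        ≤ ‖g n‖ * (ν ((n + i : ℕ) : ℤ) * ‖h (-((n + i : ℕ) : ℤ))‖) := by
          apply mul_le_mul_of_nonneg_left _ (norm_nonneg _)
          nlinarith [hν1 ((n + i : ℕ) : ℤ), norm_nonneg (h (-((n + i : ℕ) : ℤ)))]
      _ = F (n, i) := rfl
  -- key pointwise bound
  have hkey : ∀ i : ℕ, ν (i : ℤ) * ‖∑' n : ℕ, g n * h (-(n : ℤ) - (i : ℤ))‖ ≤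
      ∑' n : ℕ, F (n, i) := by
    intro i
    have h1 : ‖∑' n : ℕ, g n * h (-(n : ℤ) - (i : ℤ))‖ ≤
        ∑' n : ℕ, ‖g n * h (-(n : ℤ) - (i : ℤ))‖ := norm_tsum_le_tsum_norm (hinner i)
    calc ν (i : ℤ) * ‖∑' n : ℕ, g n * h (-(n : ℤ) - (i : ℤ))‖
        ≤ ν (i : ℤ) * ∑' n : ℕ, ‖g n * h (-(n : ℤ) - (i : ℤ))‖ :=
          mul_le_mul_of_nonneg_left h1 (hν0' _)
      _ = ∑' n : ℕ, ν (i : ℤ) * ‖g n * h (-(n : ℤ) - (i : ℤ))‖ := by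
          rw [tsum_mul_left]
      _ ≤ ∑' n : ℕ, F (n, i) := by
          apply Summable.tsum_le_tsum _ ((hinner i).mul_left _) (hF.prod_symm.prod_factor i)
          intro n
          rw [norm_mul, hidx n i]
          have hmono : ν (i : ℤ) ≤ ν ((n + i : ℕ) : ℤ) := by
            apply hνmono _ _ (Int.ofNat_nonneg i)
            push_cast; omega
          have := norm_nonneg (h (-((n + i : ℕ) : ℤ)))
          have := norm_nonneg (g n)
          show ν (i : ℤ) * (‖g n‖ * ‖h (-((n + i : ℕ) : ℤ))‖) ≤
            ‖g n‖ * (ν ((n + i : ℕ) : ℤ) * ‖h (-((n + i : ℕ) : ℤ))‖)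
          nlinarith [mul_le_mul_of_nonneg_right hmono (norm_nonneg (h (-((n + i : ℕ) : ℤ)))),
            mul_le_mul_of_nonneg_left (mul_le_mul_of_nonneg_right hmono
              (norm_nonneg (h (-((n + i : ℕ) : ℤ))))) (norm_nonneg (g n))]
  have hGsum : Summable fun i : ℕ => ∑' n : ℕ, F (n, i) := hF.prod_symm.prod
  have hsum : Summable (fun i : ℕ => ν (i : ℤ) * ‖∑' n : ℕ, g n * h (-(n : ℤ) - (i : ℤ))‖) := by
    apply Summable.of_nonneg_of_le (fun i => mul_nonneg (hν0' _) (norm_nonneg _)) hkey hGsum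
  refine ⟨hsum, ?_⟩
  -- total bound
  set A : ℝ := ∑' i : ℕ, ν (i : ℤ) * ‖h (-(i : ℤ))‖ with hA
  have hshift : ∀ n : ℕ, ∑' i : ℕ, a (n + i) ≤ A := by
    intro n
    apply Summable.tsum_le_tsum_of_inj (fun i => n + i) (add_right_injective n)
      (fun c _ => ha0 c) (fun i => le_refl _)
      (hhm.comp_injective (add_right_injective n)) hhm
  have step1 : (∑' i : ℕ, ν (i : ℤ) * ‖∑' n : ℕ, g n * h (-(n : ℤ) - (i : ℤ))‖) ≤
      ∑' i : ℕ, ∑' n : ℕ, F (n, i) := Summable.tsum_le_tsum hkey hsum hGsum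
  have step2 : (∑' i : ℕ, ∑' n : ℕ, F (n, i)) = ∑' n : ℕ, ∑' i : ℕ, F (n, i) := by
    exact Summable.tsum_comm' (by exact hF) hF.prod_factor hF.prod_symm.prod_factor
  have step3 : (∑' n : ℕ, ∑' i : ℕ, F (n, i)) ≤ A * ∑' n : ℕ, ‖g n‖ := by
    have heq : ∀ n : ℕ, (∑' i : ℕ, F (n, i)) = ‖g n‖ * ∑' i : ℕ, a (n + i) := by
      intro n; rw [← tsum_mul_left]
    calc (∑' n : ℕ, ∑' i : ℕ, F (n, i)) ≤ ∑' n : ℕ, ‖g n‖ * A := by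
          apply Summable.tsum_le_tsum _ hF.prod (hg.mul_right A)
          intro n
          rw [heq n]
          exact mul_le_mul_of_nonneg_left (hshift n) (norm_nonneg _)
      _ = A * ∑' n : ℕ, ‖g n‖ := by rw [tsum_mul_right, mul_comm]
  calc (∑' i : ℕ, ν (i : ℤ) * ‖∑' n : ℕ, g n * h (-(n : ℤ) - (i : ℤ))‖)
      ≤ ∑' i : ℕ, ∑' n : ℕ, F (n, i) := step1
    _ = ∑' n : ℕ, ∑' i : ℕ, F (n, i) := step2
    _ ≤ A * ∑' n : ℕ, ‖g n‖ := step3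
end

section
/- Let ν be a Beurling weight increasing on ℤ₊ and h ∈ A_1 with P_-(h) ∈ A_ν^-. If g ∈ A_ν^-, then P_-(g·h) ∈ A_ν^-. -/
/-! With `u k = ν (-k) ‖g k‖` and `w n = ν (max n 0) ‖h (-n)‖`, both summable over `ℤ`,
submultiplicativity and monotonicity of `ν` on `ℤ₊` give `ν i ≤ ν (-k) ν (max (i + k) 0)`
for `i ≥ 0`. Hence `ν i ‖(g h)_{-i}‖ ≤ ∑ₖ u k w (i + k)`, and the right-hand side is summable
in `i` as a convolution of two nonnegative summable sequences. -/

theorem summable_mul_comp_add {G : Type*} [AddGroup G] {u w : G → ℝ} (hu : Summable u)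
    (hw : Summable w) (hu0 : 0 ≤ u) (hw0 : 0 ≤ w) :
    Summable fun p : G × G => u p.2 * w (p.1 + p.2) := by
  let e : G × G ≃ G × G :=
    (Equiv.prodComm G G).trans ((Equiv.refl G).prodShear fun k => Equiv.addRight k)
  exact e.summable_iff.mpr (hu.mul_of_nonneg hw hu0 hw0)

theorem summable_mul_norm_tsum_of_le {ι κ E : Type*} [NormedAddCommGroup E] [CompleteSpace E]
    {c : ι → ℝ} {a : ι → κ → E} {F : ι × κ → ℝ} (hF : Summable F) (hc : ∀ i, 1 ≤ c i)
    (hle : ∀ i k, c i * ‖a i k‖ ≤ F (i, k)) :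
    Summable fun i => c i * ‖∑' k, a i k‖ := by
  have hc0 i : 0 ≤ c i := zero_le_one.trans (hc i)
  have hnorm_le i k : ‖a i k‖ ≤ F (i, k) :=
    (le_mul_of_one_le_left (norm_nonneg _) (hc i)).trans (hle i k)
  have hsummable i : Summable fun k => ‖a i k‖ :=
    .of_nonneg_of_le (fun _ => norm_nonneg _) (hnorm_le i) (hF.prod_factor i)
  refine .of_nonneg_of_le (fun i => mul_nonneg (hc0 i) (norm_nonneg _)) (fun i => ?_) hF.prod
  calc c i * ‖∑' k, a i k‖ ≤ c i * ∑' k, ‖a i k‖ :=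
        mul_le_mul_of_nonneg_left (norm_tsum_le_tsum_norm (hsummable i)) (hc0 i)
    _ = ∑' k, c i * ‖a i k‖ := tsum_mul_left.symm
    _ ≤ ∑' k, F (i, k) :=
        ((hsummable i).mul_left (c i)).tsum_le_tsum (hle i) (hF.prod_factor i)

theorem weight_le_mul_weight_max_add {ν : ℤ → ℝ} (hνsub : ∀ n m : ℤ, ν (n + m) ≤ ν n * ν m)
    (hνmono : ∀ n m : ℤ, 0 ≤ n → n ≤ m → ν n ≤ ν m) {i : ℤ} (hi : 0 ≤ i) (k : ℤ) :
    ν i ≤ ν (-k) * ν (max (i + k) 0) := by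
  rcases le_total 0 (i + k) with hik | hik
  · simpa [max_eq_left hik] using hνsub (-k) (i + k)
  · rw [max_eq_right hik]
    calc ν i ≤ ν (-k) := hνmono i (-k) hi (by omega)
      _ = ν (-k + 0) := by rw [add_zero]
      _ ≤ ν (-k) * ν 0 := hνsub _ _

theorem projMinus_mul_AnuMinus_general (ν : ℤ → ℝ)
    (hν1 : ∀ n : ℤ, 1 ≤ ν n)
    (hνsub : ∀ n m : ℤ, ν (n + m) ≤ ν n * ν m)
    (hνmono : ∀ n m : ℤ, 0 ≤ n → n ≤ m → ν n ≤ ν m)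
    (h : ℤ → ℂ)
    (hh : Summable fun k : ℤ => ‖h k‖)
    (hhm : Summable fun i : ℕ => ν (i : ℤ) * ‖h (-(i : ℤ))‖)
    (g : ℤ → ℂ)
    (hgsupp : ∀ k : ℤ, 0 < k → g k = 0)
    (hgν : Summable fun k : ℕ => ν (k : ℤ) * ‖g (-(k : ℤ))‖) :
    Summable fun i : ℕ => ν (i : ℤ) * ‖∑' k : ℤ, g k * h (-(i : ℤ) - k)‖ := by
  have hν0 n : 0 ≤ ν n := zero_le_one.trans (hν1 n)
  let u : ℤ → ℝ := fun k => ν (-k) * ‖g k‖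
  let w : ℤ → ℝ := fun n => ν (max n 0) * ‖h (-n)‖
  have hu : Summable u := by
    refine .of_nat_of_neg (summable_of_ne_finset_zero (s := {0}) fun n hn => ?_) ?_
    · rw [Finset.mem_singleton] at hn
      simp [u, hgsupp n (by omega)]
    · simpa [u] using hgν
  have hw : Summable w := by
    refine .of_nat_of_neg (by simpa [w] using hhm) ?_
    simpa [w] using (hh.comp_injective Nat.cast_injective).mul_left (ν 0)
  have hF : Summable fun p : ℕ × ℤ => u p.2 * w (p.1 + p.2) :=
    (summable_mul_comp_add hu hw (fun _ => mul_nonneg (hν0 _) (norm_nonneg _))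
      (fun _ => mul_nonneg (hν0 _) (norm_nonneg _))).comp_injective
      (i := Prod.map ((↑) : ℕ → ℤ) id)
      (Prod.map_injective.mpr ⟨Nat.cast_injective, Function.injective_id⟩)
  refine summable_mul_norm_tsum_of_le hF (fun i => hν1 i) fun i k => ?_
  calc ν i * ‖g k * h (-i - k)‖
      ≤ ν (-k) * ν (max (i + k) 0) * (‖g k‖ * ‖h (-i - k)‖) := by
        rw [norm_mul]
        gcongr
        exact weight_le_mul_weight_max_add hνsub hνmono (Int.natCast_nonneg i) k
    _ = u k * w (i + k) := by simp only [u, w, neg_add']; ring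

/-- Projection lemma, second case: if `h ∈ A_1` with `P_-(h) ∈ A_ν^-` and
`g ∈ A_ν^-`, then `P_-(g·h) ∈ A_ν^-`.  Here `g` is supported on indices
`≤ 0` and the coefficient of `z^{-i}` in `g·h` is `Σ_{k∈ℤ} g_k h_{-i-k}`. -/
theorem projMinus_mul_AnuMinus (ν : ℤ → ℝ)
    (hν0 : ν 0 = 1)
    (hν1 : ∀ n : ℤ, 1 ≤ ν n)
    (hνsym : ∀ n : ℤ, ν (-n) = ν n)
    (hνsub : ∀ n m : ℤ, ν (n + m) ≤ ν n * ν m)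
    (hνmono : ∀ n m : ℤ, 0 ≤ n → n ≤ m → ν n ≤ ν m)
    (h : ℤ → ℂ)
    (hh : Summable fun k : ℤ => ‖h k‖)
    (hhm : Summable fun i : ℕ => ν (i : ℤ) * ‖h (-(i : ℤ))‖)
    (g : ℤ → ℂ)
    (hgsupp : ∀ k : ℤ, 0 < k → g k = 0)
    (hgν : Summable fun k : ℕ => ν (k : ℤ) * ‖g (-(k : ℤ))‖) :
    Summable fun i : ℕ => ν (i : ℤ) * ‖∑' k : ℤ, g k * h (-(i : ℤ) - k)‖ :=
  projMinus_mul_AnuMinus_general ν hν1 hνsub hνmono h hh hhm g hgsupp hgν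
end

section
/- Let g(z)=Σ_{k∈ℤ} d_k z^k ∈ A_1 and let ν be a Beurling weight increasing on ℤ₊ with R = lim ν(n)^{1/n}. Let r be a rational function with no poles in the annulus 1/R ≤ |z| ≤ 1, and write r(z)g(z)=Σ_{k∈ℤ} d̂_k z^k. If Σ_{k<0} d_k z^k ∈ A_ν^-, then Σ_{k<0} d̂_k z^k ∈ A_ν^-. -/
/-!
The weight `negWeight ν` is `1` on `ℤ₊` and `ν (-j)` at negative `j`. Since `ν` is
submultiplicative and nondecreasing on `ℤ₊`, this weight is submultiplicative, so the functions
on the unit circle with weighted-summable Laurent coefficients form an algebra (coefficients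
convolve). The hypotheses on `g` say exactly that `g` lies in this algebra, and the conclusion
follows once `r g` does, because the coefficients of an absolutely convergent Laurent series on
the circle are unique. For `r = p / q`, `1 / q` is a constant times a product of factors
`(z - a)⁻¹`: a root with `|a| > 1` gives a series in nonnegative powers of `z`, and a root with
`|a| < 1/R` one in negative powers with coefficients `a ^ n`, which are `ν`-summable by the root
test since `ν(n) ^ (1/n) → R`.
-/

open Filter Complex Real

noncomputable def intConv (c e : ℤ → ℂ) (k : ℤ) : ℂ := ∑' j, c j * e (k - j)

def shearEquiv : ℤ × ℤ ≃ ℤ × ℤ where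
  toFun q := (q.2, q.1 - q.2)
  invFun p := (p.1 + p.2, p.1)
  left_inv q := by simp
  right_inv p := by simp

section Convolution

variable {f g : ℤ → ℝ} {c e : ℤ → ℂ}

lemma summable_mul_shear (hf0 : 0 ≤ f) (hg0 : 0 ≤ g) (hf : Summable f) (hg : Summable g) :
    Summable fun q : ℤ × ℤ => f q.2 * g (q.1 - q.2) :=
  shearEquiv.summable_iff.2 (hf.mul_of_nonneg hg hf0 hg0)

lemma summable_mul_sub (hf0 : 0 ≤ f) (hg0 : 0 ≤ g) (hf : Summable f) (hg : Summable g) (k : ℤ) :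
    Summable fun j => f j * g (k - j) :=
  (summable_mul_shear hf0 hg0 hf hg).prod_factor k

lemma summable_intConv_fiber (hc : Summable fun j => ‖c j‖) (he : Summable fun j => ‖e j‖)
    (k : ℤ) : Summable fun j => c j * e (k - j) :=
  .of_norm <| by
    simpa only [norm_mul] using
      summable_mul_sub (fun _ => norm_nonneg _) (fun _ => norm_nonneg _) hc he k

lemma hasSum_intConv {A B : ℂ} (hc : Summable fun j => ‖c j‖) (he : Summable fun j => ‖e j‖)
    (hA : HasSum c A) (hB : HasSum e B) : HasSum (intConv c e) (A * B) := by
  have hprod : HasSum (fun p : ℤ × ℤ => c p.1 * e p.2) (A * B) :=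
    hA.mul hB (summable_mul_of_summable_norm hc he)
  have hsheared : HasSum (fun q : ℤ × ℤ => c q.2 * e (q.1 - q.2)) (A * B) :=
    shearEquiv.hasSum_iff.2 hprod
  exact hsheared.prod_fiberwise fun k => (summable_intConv_fiber hc he k).hasSum

lemma intConv_mul_zpow {z : ℂ} (hz : z ≠ 0) :
    intConv (fun j => c j * z ^ j) (fun j => e j * z ^ j) = fun k => intConv c e k * z ^ k := by
  ext k
  rw [intConv, intConv, ← tsum_mul_right]
  congr 1 with j
  rw [mul_mul_mul_comm, ← zpow_add₀ hz, add_sub_cancel]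

lemma norm_intConv_le (hc : Summable fun j => ‖c j‖) (he : Summable fun j => ‖e j‖) (k : ℤ) :
    ‖intConv c e k‖ ≤ ∑' j, ‖c j‖ * ‖e (k - j)‖ := by
  simpa only [intConv, norm_mul] using norm_tsum_le_tsum_norm (summable_intConv_fiber hc he k).norm

lemma summable_norm_of_summable_weight_mul {W : ℤ → ℝ} (hW1 : ∀ j, 1 ≤ W j)
    (hc : Summable fun j => W j * ‖c j‖) : Summable fun j => ‖c j‖ :=
  hc.of_nonneg_of_le (fun _ => norm_nonneg _) fun j => le_mul_of_one_le_left (norm_nonneg _) (hW1 j)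

lemma summable_weight_mul_norm_intConv {W : ℤ → ℝ} (hW1 : ∀ j, 1 ≤ W j)
    (hWsub : ∀ i j, W (i + j) ≤ W i * W j)
    (hc : Summable fun j => W j * ‖c j‖) (he : Summable fun j => W j * ‖e j‖) :
    Summable fun k => W k * ‖intConv c e k‖ := by
  have hW0 : ∀ j, 0 ≤ W j := fun j => zero_le_one.trans (hW1 j)
  have hc1 := summable_norm_of_summable_weight_mul hW1 hc
  have he1 := summable_norm_of_summable_weight_mul hW1 he
  have hc0 : ∀ j, 0 ≤ W j * ‖c j‖ := fun j => mul_nonneg (hW0 j) (norm_nonneg _)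
  have he0 : ∀ j, 0 ≤ W j * ‖e j‖ := fun j => mul_nonneg (hW0 j) (norm_nonneg _)
  have hmajorant : Summable fun k => ∑' j, (W j * ‖c j‖) * (W (k - j) * ‖e (k - j)‖) :=
    (summable_mul_shear hc0 he0 hc he).prod
  refine hmajorant.of_nonneg_of_le (fun k => mul_nonneg (hW0 k) (norm_nonneg _)) fun k => ?_
  have hfiber := summable_mul_sub (fun _ => norm_nonneg _) (fun _ => norm_nonneg _) hc1 he1 k
  calc W k * ‖intConv c e k‖ ≤ W k * ∑' j, ‖c j‖ * ‖e (k - j)‖ :=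
        mul_le_mul_of_nonneg_left (norm_intConv_le hc1 he1 k) (hW0 k)
    _ = ∑' j, W k * (‖c j‖ * ‖e (k - j)‖) := tsum_mul_left.symm
    _ ≤ ∑' j, (W j * ‖c j‖) * (W (k - j) * ‖e (k - j)‖) := by
        refine (hfiber.mul_left _).tsum_le_tsum (fun j => ?_)
          (summable_mul_sub hc0 he0 hc he k)
        have hk : W k ≤ W j * W (k - j) := by simpa only [add_sub_cancel] using hWsub j (k - j)
        calc W k * (‖c j‖ * ‖e (k - j)‖) ≤ (W j * W (k - j)) * (‖c j‖ * ‖e (k - j)‖) :=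
              mul_le_mul_of_nonneg_right hk (by positivity)
          _ = (W j * ‖c j‖) * (W (k - j) * ‖e (k - j)‖) := by ring

end Convolution

def HasWeightedLaurentSeries (W : ℤ → ℝ) (F : ℂ → ℂ) : Prop :=
  ∃ c : ℤ → ℂ, (Summable fun j => W j * ‖c j‖) ∧
    ∀ z : ℂ, ‖z‖ = 1 → HasSum (fun j => c j * z ^ j) (F z)

namespace HasWeightedLaurentSeries

variable {W : ℤ → ℝ} {F G : ℂ → ℂ}

lemma congr (hF : HasWeightedLaurentSeries W F) (h : ∀ z : ℂ, ‖z‖ = 1 → F z = G z) :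
    HasWeightedLaurentSeries W G := by
  obtain ⟨c, hc, hcF⟩ := hF
  exact ⟨c, hc, fun z hz => h z hz ▸ hcF z hz⟩

lemma mul (hW1 : ∀ j, 1 ≤ W j) (hWsub : ∀ i j, W (i + j) ≤ W i * W j)
    (hF : HasWeightedLaurentSeries W F) (hG : HasWeightedLaurentSeries W G) :
    HasWeightedLaurentSeries W fun z => F z * G z := by
  obtain ⟨c, hc, hcF⟩ := hF
  obtain ⟨e, he, heG⟩ := hG
  refine ⟨intConv c e, summable_weight_mul_norm_intConv hW1 hWsub hc he, fun z hz => ?_⟩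
  have hz0 : z ≠ 0 := by rintro rfl; simp at hz
  have hnorm : ∀ (a : ℤ → ℂ), Summable (fun j => W j * ‖a j‖) →
      Summable fun j => ‖a j * z ^ j‖ := fun a ha => by
    simpa only [norm_mul, norm_zpow, hz, one_zpow, mul_one] using
      summable_norm_of_summable_weight_mul hW1 ha
  rw [← intConv_mul_zpow hz0]
  exact hasSum_intConv (hnorm c hc) (hnorm e he) (hcF z hz) (heG z hz)

lemma of_injective {g : ℕ → ℤ} (hg : g.Injective) (f : ℕ → ℂ)
    (hf : Summable fun n => W (g n) * ‖f n‖)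
    (hF : ∀ z : ℂ, ‖z‖ = 1 → HasSum (fun n => f n * z ^ g n) (F z)) :
    HasWeightedLaurentSeries W F := by
  have hzero : ∀ j ∉ Set.range g, Function.extend g f 0 j = 0 := fun j hj =>
    Function.extend_apply' _ _ _ (by simpa using hj)
  refine ⟨Function.extend g f 0, ?_, fun z hz => ?_⟩
  · refine (hg.summable_iff fun j hj => by simp [hzero j hj]).1 ?_
    simpa only [Function.comp_def, hg.extend_apply] using hf
  · refine (hg.hasSum_iff fun j hj => by simp [hzero j hj]).1 ?_
    simpa only [Function.comp_def, hg.extend_apply] using hF z hz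

end HasWeightedLaurentSeries

section Expansions

variable {W : ℤ → ℝ}

open Polynomial in
lemma hasWeightedLaurentSeries_eval (p : ℂ[X]) :
    HasWeightedLaurentSeries W fun z => p.eval z := by
  have hfin : ∀ n ∉ Finset.range (p.natDegree + 1), p.coeff n = 0 := fun n hn =>
    p.coeff_eq_zero_of_natDegree_lt (by simpa [Nat.lt_succ_iff] using hn)
  refine .of_injective Nat.cast_injective p.coeff
    (summable_of_ne_finset_zero (s := Finset.range (p.natDegree + 1)) fun n hn => by
      simp [hfin n hn]) fun z _ => ?_
  simp only [zpow_natCast]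
  rw [p.eval_eq_sum_range]
  exact hasSum_sum_of_ne_finset_zero fun n hn => by simp [hfin n hn]

lemma hasWeightedLaurentSeries_inv_sub_of_one_lt_norm {a : ℂ} (ha : 1 < ‖a‖)
    (hW : Summable fun n : ℕ => W n * ‖a‖⁻¹ ^ n) :
    HasWeightedLaurentSeries W fun z => (z - a)⁻¹ := by
  have ha0 : a ≠ 0 := norm_pos_iff.1 (zero_lt_one.trans ha)
  refine .of_injective Nat.cast_injective (fun n => -a⁻¹ ^ (n + 1)) ?_ fun z hz => ?_
  · refine (hW.mul_left ‖a‖⁻¹).congr fun n => ?_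
    rw [norm_neg, norm_pow, norm_inv, pow_succ]
    ring
  · have hq : ‖z * a⁻¹‖ < 1 := by
      rwa [norm_mul, hz, one_mul, norm_inv, inv_lt_one₀ (zero_lt_one.trans ha)]
    have hfactor : z - a = -a * (1 - z * a⁻¹) := by
      field_simp
      ring
    rw [hfactor, mul_inv, ← neg_inv]
    refine ((hasSum_geometric_of_norm_lt_one hq).mul_left (-a⁻¹)).congr_fun fun n => ?_
    rw [zpow_natCast, mul_pow, pow_succ]
    ring

lemma hasWeightedLaurentSeries_inv_sub_of_norm_lt_one {a : ℂ} (ha : ‖a‖ < 1)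
    (hW : Summable fun n : ℕ => W (-n - 1) * ‖a‖ ^ n) :
    HasWeightedLaurentSeries W fun z => (z - a)⁻¹ := by
  refine .of_injective (g := fun n : ℕ => -(n : ℤ) - 1) (fun m n h => by simpa using h)
    (fun n => a ^ n) (by simpa only [norm_pow] using hW) fun z hz => ?_
  have hz0 : z ≠ 0 := by rintro rfl; simp at hz
  have hq : ‖a * z⁻¹‖ < 1 := by rwa [norm_mul, norm_inv, hz, inv_one, mul_one]
  have hfactor : z - a = z * (1 - a * z⁻¹) := by field_simp
  rw [hfactor, mul_inv]
  refine ((hasSum_geometric_of_norm_lt_one hq).mul_left z⁻¹).congr_fun fun n => ?_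
  rw [zpow_sub₀ hz0, zpow_neg, zpow_natCast, zpow_one, mul_pow, inv_pow]
  ring

lemma hasWeightedLaurentSeries_multiset_prod (hW1 : ∀ j, 1 ≤ W j)
    (hWsub : ∀ i j, W (i + j) ≤ W i * W j) {ι : Type*} (s : Multiset ι) (f : ι → ℂ → ℂ)
    (hf : ∀ i ∈ s, HasWeightedLaurentSeries W (f i)) :
    HasWeightedLaurentSeries W fun z => (s.map fun i => f i z).prod := by
  induction s using Multiset.induction_on with
  | empty => simpa using hasWeightedLaurentSeries_eval (W := W) 1
  | cons i s ih =>
    simp only [Multiset.map_cons, Multiset.prod_cons]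
    exact (hf i (Multiset.mem_cons_self i s)).mul hW1 hWsub
      (ih fun j hj => hf j (Multiset.mem_cons_of_mem hj))

open Polynomial in
lemma hasWeightedLaurentSeries_eval_div_eval (hW1 : ∀ j, 1 ≤ W j)
    (hWsub : ∀ i j, W (i + j) ≤ W i * W j) (p q : ℂ[X])
    (hroots : ∀ a ∈ q.roots, HasWeightedLaurentSeries W fun z => (z - a)⁻¹) :
    HasWeightedLaurentSeries W fun z => p.eval z / q.eval z := by
  have hq : ∀ z, q.eval z = q.leadingCoeff * (q.roots.map fun a => z - a).prod := fun z => by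
    conv_lhs => rw [(IsAlgClosed.splits q).eq_prod_roots]
    simp [eval_multiset_prod, Multiset.map_map]
  refine ((hasWeightedLaurentSeries_eval (p * C q.leadingCoeff⁻¹)).mul hW1 hWsub
    (hasWeightedLaurentSeries_multiset_prod hW1 hWsub q.roots _ hroots)).congr fun z _ => ?_
  simp only [eval_mul, eval_C, hq, div_eq_mul_inv, mul_inv, Multiset.prod_map_inv]
  ring

end Expansions

lemma circleIntegral_mul_zpow (u : ℂ) (n : ℤ) :
    (∮ z in C(0, 1), u * z ^ n) = if n = -1 then u * (2 * π * I) else 0 := by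
  rw [circleIntegral.integral_const_mul]
  split_ifs with hn
  · simp_rw [hn, zpow_neg_one]
    simpa using congrArg (u * ·) (circleIntegral.integral_sub_center_inv (0 : ℂ) one_ne_zero)
  · simpa using congrArg (u * ·) (circleIntegral.integral_sub_zpow_of_ne hn 0 0 1)

lemma eq_zero_of_hasSum_mul_zpow_eq_zero {u : ℤ → ℂ} (hu : Summable fun j => ‖u j‖)
    (h : ∀ z : ℂ, ‖z‖ = 1 → HasSum (fun j => u j * z ^ j) 0) (k : ℤ) : u k = 0 := by
  have hw0 (θ : ℝ) : circleMap 0 1 θ ≠ 0 := circleMap_ne_center one_ne_zero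
  have hcont (j : ℤ) :
      Continuous fun θ => deriv (circleMap 0 1) θ • (u j * circleMap 0 1 θ ^ (j - k - 1)) := by
    simp only [deriv_circleMap, smul_eq_mul]
    exact (continuous_circleMap 0 1).mul continuous_const |>.mul <| continuous_const.mul <|
      (continuous_circleMap 0 1).zpow₀ _ fun θ => .inl (hw0 θ)
  have hnorm (j : ℤ) (θ : ℝ) :
      ‖deriv (circleMap 0 1) θ • (u j * circleMap 0 1 θ ^ (j - k - 1))‖ = ‖u j‖ := by
    simp [deriv_circleMap, norm_circleMap_zero]
  have hlim (θ : ℝ) :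
      HasSum (fun j => deriv (circleMap 0 1) θ • (u j * circleMap 0 1 θ ^ (j - k - 1))) 0 := by
    have := (h (circleMap 0 1 θ) (by simp [norm_circleMap_zero])).mul_left
      (deriv (circleMap 0 1) θ * circleMap 0 1 θ ^ (-k - 1))
    rw [mul_zero] at this
    refine this.congr_fun fun j => ?_
    rw [smul_eq_mul, show j - k - 1 = j + (-k - 1) by ring, zpow_add₀ (hw0 θ)]
    ring
  -- integrate `z ^ (-k - 1) * ∑ u j * z ^ j = 0` termwise over the unit circle
  have hsum : HasSum (fun j => ∮ z in C(0, 1), u j * z ^ (j - k - 1)) 0 := by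
    simpa [circleIntegral] using
      intervalIntegral.hasSum_integral_of_dominated_convergence (μ := MeasureTheory.volume)
        (a := 0) (b := 2 * π) (fun j _ => ‖u j‖) (fun j => (hcont j).aestronglyMeasurable)
        (fun j => .of_forall fun θ _ => (hnorm j θ).le) (.of_forall fun _ _ => hu)
        intervalIntegrable_const (.of_forall fun θ _ => hlim θ)
  have hterm : ∀ j, (∮ z in C(0, 1), u j * z ^ (j - k - 1)) =
      if j = k then u k * (2 * π * I) else 0 := by
    intro j
    rw [circleIntegral_mul_zpow]
    by_cases hj : j = k
    · simp [hj]
    · simp [hj, show j - k - 1 ≠ -1 by omega]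
  simp_rw [hterm] at hsum
  have := hsum.unique (hasSum_ite_eq k _)
  simpa [pi_ne_zero, I_ne_zero] using this.symm

lemma eq_of_hasSum_mul_zpow {u v : ℤ → ℂ} {F : ℂ → ℂ} (hu : Summable fun j => ‖u j‖)
    (hv : Summable fun j => ‖v j‖) (huF : ∀ z : ℂ, ‖z‖ = 1 → HasSum (fun j => u j * z ^ j) (F z))
    (hvF : ∀ z : ℂ, ‖z‖ = 1 → HasSum (fun j => v j * z ^ j) (F z)) : u = v := by
  ext k
  rw [← sub_eq_zero]
  refine eq_zero_of_hasSum_mul_zpow_eq_zero (u := u - v)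
    ((hu.add hv).of_nonneg_of_le (fun _ => norm_nonneg _) fun j => norm_sub_le _ _)
    (fun z hz => ?_) k
  simpa [sub_mul] using (huF z hz).sub (hvF z hz)

lemma one_le_of_tendsto_rpow_inv {f : ℕ → ℝ} {R : ℝ} (hf : ∀ n, 1 ≤ f n)
    (hR : Tendsto (fun n => f n ^ (n : ℝ)⁻¹) atTop (nhds R)) : 1 ≤ R :=
  ge_of_tendsto' hR fun n => Real.one_le_rpow (hf n) (by positivity)

lemma summable_of_tendsto_rpow_inv_lt_one {f : ℕ → ℝ} {L : ℝ} (hf : ∀ n, 0 ≤ f n)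
    (hL : Tendsto (fun n => f n ^ (n : ℝ)⁻¹) atTop (nhds L)) (hL1 : L < 1) : Summable f := by
  obtain ⟨t, hLt, ht1⟩ := exists_between hL1
  have ht0 : 0 ≤ t := (ge_of_tendsto' hL fun n => Real.rpow_nonneg (hf n) _).trans hLt.le
  refine (summable_geometric_of_lt_one ht0 ht1).of_norm_bounded_eventually_nat ?_
  filter_upwards [hL.eventually (gt_mem_nhds hLt), eventually_ne_atTop 0] with n hn hn0
  rw [Real.norm_of_nonneg (hf n), ← Real.rpow_inv_natCast_pow (hf n) hn0]
  exact pow_le_pow_left₀ (Real.rpow_nonneg (hf n) _) hn.le n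

lemma summable_mul_pow_of_lt_inv {ν : ℤ → ℝ} {R s : ℝ} (hν1 : ∀ n, 1 ≤ ν n)
    (hνsub : ∀ n m, ν (n + m) ≤ ν n * ν m)
    (hR : Tendsto (fun n : ℕ => ν n ^ (n : ℝ)⁻¹) atTop (nhds R)) (hs0 : 0 ≤ s) (hs : s < R⁻¹) :
    Summable fun n : ℕ => ν (n + 1) * s ^ n := by
  have hν0 : ∀ n, 0 ≤ ν n := fun n => zero_le_one.trans (hν1 n)
  have hR0 : 0 < R := zero_lt_one.trans_le (one_le_of_tendsto_rpow_inv (fun n => hν1 n) hR)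
  have hroot : Tendsto (fun n : ℕ => (ν n * s ^ n) ^ (n : ℝ)⁻¹) atTop (nhds (R * s)) := by
    refine (hR.mul_const s).congr' ?_
    filter_upwards [eventually_ne_atTop 0] with n hn
    rw [Real.mul_rpow (hν0 n) (pow_nonneg hs0 n), Real.pow_rpow_inv_natCast hs0 hn]
  have hsum := summable_of_tendsto_rpow_inv_lt_one (fun n => mul_nonneg (hν0 n) (pow_nonneg hs0 n))
    hroot (by rwa [← lt_inv_mul_iff₀ hR0, mul_one])
  refine (hsum.mul_left (ν 1)).of_nonneg_of_le (fun n => mul_nonneg (hν0 _) (pow_nonneg hs0 n))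
    fun n => ?_
  calc ν (n + 1) * s ^ n ≤ (ν n * ν 1) * s ^ n :=
        mul_le_mul_of_nonneg_right (hνsub n 1) (pow_nonneg hs0 n)
    _ = ν 1 * (ν n * s ^ n) := by ring

def negWeight (ν : ℤ → ℝ) (j : ℤ) : ℝ := if 0 ≤ j then 1 else ν (-j)

section NegWeight

variable {ν : ℤ → ℝ}

lemma negWeight_of_nonneg {j : ℤ} (hj : 0 ≤ j) : negWeight ν j = 1 := if_pos hj

lemma negWeight_of_neg {j : ℤ} (hj : j < 0) : negWeight ν j = ν (-j) := if_neg (not_le.2 hj)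

lemma one_le_negWeight (hν1 : ∀ n, 1 ≤ ν n) (j : ℤ) : 1 ≤ negWeight ν j := by
  rcases le_or_gt 0 j with hj | hj
  · rw [negWeight_of_nonneg hj]
  · rw [negWeight_of_neg hj]
    exact hν1 _

lemma negWeight_add_le (hν1 : ∀ n, 1 ≤ ν n) (hνsub : ∀ n m, ν (n + m) ≤ ν n * ν m)
    (hνmono : ∀ n m, 0 ≤ n → n ≤ m → ν n ≤ ν m) (i j : ℤ) :
    negWeight ν (i + j) ≤ negWeight ν i * negWeight ν j := by
  rcases le_or_gt 0 (i + j) with hij | hij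
  · rw [negWeight_of_nonneg hij]
    exact one_le_mul_of_one_le_of_one_le (one_le_negWeight hν1 i) (one_le_negWeight hν1 j)
  rw [negWeight_of_neg hij]
  rcases le_or_gt 0 i with hi | hi <;> rcases le_or_gt 0 j with hj | hj
  · omega
  · rw [negWeight_of_nonneg hi, negWeight_of_neg hj, one_mul]
    exact hνmono _ _ (by omega) (by omega)
  · rw [negWeight_of_neg hi, negWeight_of_nonneg hj, mul_one]
    exact hνmono _ _ (by omega) (by omega)
  · rw [negWeight_of_neg hi, negWeight_of_neg hj, neg_add]
    exact hνsub _ _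

lemma summable_negWeight_mul_norm_iff (c : ℤ → ℂ) :
    (Summable fun j => negWeight ν j * ‖c j‖) ↔
      (Summable fun n : ℕ => ‖c n‖) ∧ Summable fun n : ℕ => ν (n + 1) * ‖c (-n - 1)‖ := by
  rw [summable_int_iff_summable_nat_and_neg_add_zero]
  have hneg (n : ℕ) : negWeight ν (-n - 1) = ν (n + 1) := by
    rw [negWeight_of_neg (by omega), neg_sub, sub_neg_eq_add, add_comm]
  simp only [negWeight_of_nonneg (Int.natCast_nonneg _), one_mul, neg_add', hneg]

end NegWeight

lemma hasWeightedLaurentSeries_negWeight_inv_sub {ν : ℤ → ℝ} {R : ℝ} (hν1 : ∀ n, 1 ≤ ν n)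
    (hνsub : ∀ n m, ν (n + m) ≤ ν n * ν m)
    (hR : Tendsto (fun n : ℕ => ν n ^ (n : ℝ)⁻¹) atTop (nhds R)) {a : ℂ}
    (ha : ‖a‖ < R⁻¹ ∨ 1 < ‖a‖) :
    HasWeightedLaurentSeries (negWeight ν) fun z => (z - a)⁻¹ := by
  rcases ha with ha | ha
  · have hR1 : R⁻¹ ≤ 1 := inv_le_one_of_one_le₀ (one_le_of_tendsto_rpow_inv (fun n => hν1 n) hR)
    refine hasWeightedLaurentSeries_inv_sub_of_norm_lt_one (ha.trans_le hR1) ?_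
    refine (summable_mul_pow_of_lt_inv hν1 hνsub hR (norm_nonneg a) ha).congr fun n => ?_
    rw [negWeight_of_neg (by omega), neg_sub, sub_neg_eq_add, add_comm]
  · refine hasWeightedLaurentSeries_inv_sub_of_one_lt_norm ha ?_
    refine (summable_geometric_of_lt_one (by positivity) (inv_lt_one_of_one_lt₀ ha)).congr
      fun n => ?_
    rw [negWeight_of_nonneg (Int.natCast_nonneg n), one_mul]

theorem rational_mul_preserves_negative_part_general (ν : ℤ → ℝ) (R : ℝ)
    (hν1 : ∀ n : ℤ, 1 ≤ ν n)
    (hνsub : ∀ n m : ℤ, ν (n + m) ≤ ν n * ν m)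
    (hνmono : ∀ n m : ℤ, 0 ≤ n → n ≤ m → ν n ≤ ν m)
    (hR : Tendsto (fun n : ℕ => (ν (n : ℤ)) ^ ((n : ℝ)⁻¹)) atTop (nhds R))
    (g r : ℂ → ℂ) (d dhat : ℤ → ℂ)
    -- `g(z) = Σ_k d_k z^k ∈ A_1`:
    (hd : Summable fun k : ℤ => ‖d k‖)
    (hgd : ∀ z : ℂ, ‖z‖ = 1 → HasSum (fun k : ℤ => d k * z ^ k) (g z))
    -- `r` is a rational function with no poles in `1/R ≤ |z| ≤ 1`:
    (hr : ∃ p q : Polynomial ℂ, ∀ z : ℂ, R⁻¹ ≤ ‖z‖ → ‖z‖ ≤ 1 →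
      q.eval z ≠ 0 ∧ r z = p.eval z / q.eval z)
    -- `r(z) g(z) = Σ_k d̂_k z^k`:
    (hdhat : ∀ z : ℂ, ‖z‖ = 1 → HasSum (fun k : ℤ => dhat k * z ^ k) (r z * g z))
    -- `Σ_{k<0} d_k z^k ∈ A_ν^-`:
    (hdν : Summable fun k : ℕ => ν ((k : ℤ) + 1) * ‖d (-(k : ℤ) - 1)‖) :
    -- then `Σ_{k<0} d̂_k z^k ∈ A_ν^-`:
    Summable fun k : ℕ => ν ((k : ℤ) + 1) * ‖dhat (-(k : ℤ) - 1)‖ := by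
  obtain ⟨p, q, hpq⟩ := hr
  have hR1 : R⁻¹ ≤ 1 := inv_le_one_of_one_le₀ (one_le_of_tendsto_rpow_inv (fun n => hν1 n) hR)
  have hw1 := one_le_negWeight hν1
  have hwsub := negWeight_add_le hν1 hνsub hνmono
  have hroots (a : ℂ) (ha : a ∈ q.roots) :
      HasWeightedLaurentSeries (negWeight ν) fun z => (z - a)⁻¹ := by
    refine hasWeightedLaurentSeries_negWeight_inv_sub hν1 hνsub hR ?_
    by_contra! h
    exact (hpq a h.1 h.2).1 (Polynomial.isRoot_of_mem_roots ha)
  have hrw : HasWeightedLaurentSeries (negWeight ν) r :=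
    (hasWeightedLaurentSeries_eval_div_eval hw1 hwsub p q hroots).congr fun z hz =>
      ((hpq z (hz ▸ hR1) hz.le).2).symm
  have hgw : HasWeightedLaurentSeries (negWeight ν) g :=
    ⟨d, (summable_negWeight_mul_norm_iff d).2 ⟨hd.comp_injective Nat.cast_injective, hdν⟩, hgd⟩
  obtain ⟨c, hc, hcrg⟩ := hrw.mul hw1 hwsub hgw
  have hdhat1 : Summable fun j => ‖dhat j‖ :=
    summable_norm_iff.2 (by simpa using (hdhat 1 (by simp)).summable)
  have hdhat_eq : dhat = c :=
    eq_of_hasSum_mul_zpow hdhat1 (summable_norm_of_summable_weight_mul hw1 hc) hdhat hcrg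
  exact (hdhat_eq ▸ (summable_negWeight_mul_norm_iff c).1 hc).2

/-- Corollary: multiplying `g ∈ A_1` by a rational function `r` without poles
in the annulus `1/R ≤ |z| ≤ 1` preserves the property that the negative part
of the coefficient sequence lies in `A_ν^-`. -/
theorem rational_mul_preserves_negative_part (ν : ℤ → ℝ) (R : ℝ)
    (hν0 : ν 0 = 1)
    (hν1 : ∀ n : ℤ, 1 ≤ ν n)
    (hνsym : ∀ n : ℤ, ν (-n) = ν n)
    (hνsub : ∀ n m : ℤ, ν (n + m) ≤ ν n * ν m)
    (hνmono : ∀ n m : ℤ, 0 ≤ n → n ≤ m → ν n ≤ ν m)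
    (hR : Tendsto (fun n : ℕ => (ν (n : ℤ)) ^ ((n : ℝ)⁻¹)) atTop (nhds R))
    (g r : ℂ → ℂ) (d dhat : ℤ → ℂ)
    -- `g(z) = Σ_k d_k z^k ∈ A_1`:
    (hd : Summable fun k : ℤ => ‖d k‖)
    (hgd : ∀ z : ℂ, ‖z‖ = 1 → HasSum (fun k : ℤ => d k * z ^ k) (g z))
    -- `r` is a rational function with no poles in `1/R ≤ |z| ≤ 1`:
    (hr : ∃ p q : Polynomial ℂ, ∀ z : ℂ, R⁻¹ ≤ ‖z‖ → ‖z‖ ≤ 1 →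
      q.eval z ≠ 0 ∧ r z = p.eval z / q.eval z)
    -- `r(z) g(z) = Σ_k d̂_k z^k`:
    (hdhat : ∀ z : ℂ, ‖z‖ = 1 → HasSum (fun k : ℤ => dhat k * z ^ k) (r z * g z))
    -- `Σ_{k<0} d_k z^k ∈ A_ν^-`:
    (hdν : Summable fun k : ℕ => ν ((k : ℤ) + 1) * ‖d (-(k : ℤ) - 1)‖) :
    -- then `Σ_{k<0} d̂_k z^k ∈ A_ν^-`:
    Summable fun k : ℕ => ν ((k : ℤ) + 1) * ‖dhat (-(k : ℤ) - 1)‖ :=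
  rational_mul_preserves_negative_part_general ν R hν1 hνsub hνmono hR g r d dhat hd hgd hr hdhat
    hdν
end

section
/- Suppose ν is a Beurling weight and the Verblunsky coefficients satisfy Σ_n ν(n)|α_n| < ∞. Then the ν-norms of the reversed monic polynomials and of z^{-n}Φ_n are uniformly bounded: ‖Φ*_n‖_ν ≤ Π_{i=0}^{n-1}(1+ν(i+1)|α_i|) ≤ exp(Σ_i ν(i+1)|α_i|), and the same bound holds for ‖z^{-n}Φ_n‖_ν. -/
open Polynomial Finset

set_option maxHeartbeats 1000000

private lemma tsum_coeff_eq (c : ℕ → ℝ) (p : Polynomial ℂ) (N : ℕ)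
    (hN : p.natDegree ≤ N) :
    ∑' k : ℕ, c k * ‖p.coeff k‖ = ∑ k ∈ range (N + 1), c k * ‖p.coeff k‖ := by
  refine tsum_eq_sum ?_
  intro k hk
  rw [Polynomial.coeff_eq_zero_of_natDegree_lt, norm_zero, mul_zero]
  simp only [mem_range, not_lt] at hk
  omega

/-- Uniform bounds on the `ν`-norms of the reversed monic orthogonal
polynomials `Φ*_n` and of `z^{-n}Φ_n`, when `Σ_n ν(n)|α_n| < ∞`. -/
theorem monic_opuc_nu_norm_bound (ν : ℤ → ℝ)
    (hν0 : ν 0 = 1)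
    (hν1 : ∀ n : ℤ, 1 ≤ ν n)
    (hνsym : ∀ n : ℤ, ν (-n) = ν n)
    (hνsub : ∀ n m : ℤ, ν (n + m) ≤ ν n * ν m)
    (α : ℕ → ℂ) (hαlt : ∀ n, ‖α n‖ < 1)
    (hα : Summable fun n : ℕ => ν (n : ℤ) * ‖α n‖)
    (Φ Φs : ℕ → Polynomial ℂ)
    (hΦ0 : Φ 0 = 1) (hΦs0 : Φs 0 = 1)
    (hdeg : ∀ n, (Φ n).natDegree ≤ n)
    (hdegs : ∀ n, (Φs n).natDegree ≤ n)
    -- `Φ*_{n+1} = Φ*_n − α_n z^{n+1} (z^{-n}Φ_n)`, as polynomials: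
    (hrec1 : ∀ n, Φs (n + 1) = Φs n - C (α n) * X * Φ n)
    -- `z^{-(n+1)}Φ_{n+1} = z^{-n}Φ_n − conj(α_n) z^{-(n+1)} Φ*_n`, i.e.
    -- `Φ_{n+1} = z Φ_n − conj(α_n) Φ*_n`:
    (hrec2 : ∀ n, Φ (n + 1) = X * Φ n - C ((starRingEnd ℂ) (α n)) * Φs n) :
    ∀ n : ℕ,
      (∑' k : ℕ, ν (k : ℤ) * ‖(Φs n).coeff k‖) ≤
          ∏ i ∈ range n, (1 + ν ((i : ℤ) + 1) * ‖α i‖) ∧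
      (∑' j : ℕ, ν ((j : ℤ) - (n : ℤ)) * ‖(Φ n).coeff j‖) ≤
          ∏ i ∈ range n, (1 + ν ((i : ℤ) + 1) * ‖α i‖) ∧
      (∏ i ∈ range n, (1 + ν ((i : ℤ) + 1) * ‖α i‖)) ≤
          Real.exp (∑' i : ℕ, ν ((i : ℤ) + 1) * ‖α i‖) := by
  have hνpos : ∀ m : ℤ, (0 : ℝ) < ν m := fun m => lt_of_lt_of_le one_pos (hν1 m)
  set a : ℕ → ℝ := fun i => ν ((i : ℤ) + 1) * ‖α i‖ with ha
  have ha_nonneg : ∀ i, 0 ≤ a i := fun i =>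
    mul_nonneg (hνpos _).le (norm_nonneg _)
  have ha_sum : Summable a := by
    refine Summable.of_nonneg_of_le ha_nonneg (fun i => ?_) (hα.mul_left (ν 1))
    have h1 : ν ((i : ℤ) + 1) ≤ ν (i : ℤ) * ν 1 := hνsub (i : ℤ) 1
    calc a i ≤ (ν (i : ℤ) * ν 1) * ‖α i‖ :=
          mul_le_mul_of_nonneg_right h1 (norm_nonneg _)
      _ = ν 1 * (ν (i : ℤ) * ‖α i‖) := by ring
  have hexp : ∀ n, (∏ i ∈ range n, (1 + a i)) ≤ Real.exp (∑' i, a i) := by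
    intro n
    calc ∏ i ∈ range n, (1 + a i) ≤ ∏ i ∈ range n, Real.exp (a i) := by
          refine Finset.prod_le_prod (fun i _ => ?_) (fun i _ => ?_)
          · have := ha_nonneg i; linarith
          · have := Real.add_one_le_exp (a i)
            linarith
      _ = Real.exp (∑ i ∈ range n, a i) := (Real.exp_sum _ _).symm
      _ ≤ Real.exp (∑' i, a i) := by
          exact Real.exp_le_exp.mpr (Summable.sum_le_tsum _ (fun i _ => ha_nonneg i) ha_sum)
  have main : ∀ n : ℕ,
      (∑' k : ℕ, ν (k : ℤ) * ‖(Φs n).coeff k‖) ≤ ∏ i ∈ range n, (1 + a i) ∧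
      (∑' j : ℕ, ν ((j : ℤ) - (n : ℤ)) * ‖(Φ n).coeff j‖) ≤
        ∏ i ∈ range n, (1 + a i) := by
    intro n
    induction n with
    | zero =>
        constructor
        · rw [tsum_coeff_eq _ _ 0 (by simpa [hΦs0] using hdegs 0)]
          simp [hΦs0, hν0]
        · rw [show (fun j : ℕ => ν ((j : ℤ) - ((0:ℕ) : ℤ)) * ‖(Φ 0).coeff j‖)
              = fun j : ℕ => ν (j : ℤ) * ‖(Φ 0).coeff j‖ by
            funext j; norm_num]
          rw [tsum_coeff_eq _ _ 0 (by simpa [hΦ0] using hdeg 0)]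
          simp [hΦ0, hν0]
    | succ n ih =>
        obtain ⟨hS, hT⟩ := ih
        have hPnonneg : (0:ℝ) ≤ ∏ i ∈ range n, (1 + a i) :=
          Finset.prod_nonneg fun i _ => by have := ha_nonneg i; linarith
        have hTsum : (∑' j : ℕ, ν ((j : ℤ) - (n : ℤ)) * ‖(Φ n).coeff j‖)
            = ∑ j ∈ range (n + 1), ν ((j : ℤ) - (n : ℤ)) * ‖(Φ n).coeff j‖ :=
          tsum_coeff_eq _ _ n (hdeg n)
        have hSsum : (∑' k : ℕ, ν (k : ℤ) * ‖(Φs n).coeff k‖)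
            = ∑ k ∈ range (n + 1), ν (k : ℤ) * ‖(Φs n).coeff k‖ :=
          tsum_coeff_eq _ _ n (hdegs n)
        have hXcoeff0 : (X * Φ n).coeff 0 = 0 := by
          simp [Polynomial.mul_coeff_zero]
        have prodsucc : ∏ i ∈ range (n+1), (1 + a i)
            = (∏ i ∈ range n, (1 + a i)) + a n * ∏ i ∈ range n, (1 + a i) := by
          rw [Finset.prod_range_succ]; ring
        constructor
        · -- Φs bound
          rw [tsum_coeff_eq _ _ (n+1) (hdegs (n+1))]
          have key : ∀ k, ‖(Φs (n+1)).coeff k‖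
              ≤ ‖(Φs n).coeff k‖ + ‖α n‖ * ‖(X * Φ n).coeff k‖ := by
            intro k
            rw [hrec1 n, mul_assoc, Polynomial.coeff_sub, Polynomial.coeff_C_mul]
            refine le_trans (norm_sub_le _ _) ?_
            rw [norm_mul]
          calc ∑ k ∈ range (n+2), ν (k : ℤ) * ‖(Φs (n+1)).coeff k‖
              ≤ ∑ k ∈ range (n+2), (ν (k : ℤ) * ‖(Φs n).coeff k‖
                  + ν (k : ℤ) * (‖α n‖ * ‖(X * Φ n).coeff k‖)) := by
                refine Finset.sum_le_sum fun k _ => ?_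
                rw [← mul_add]
                exact mul_le_mul_of_nonneg_left (key k) (hνpos (k : ℤ)).le
            _ = (∑ k ∈ range (n+2), ν (k : ℤ) * ‖(Φs n).coeff k‖)
                + ∑ k ∈ range (n+2), ν (k : ℤ) * (‖α n‖ * ‖(X * Φ n).coeff k‖) :=
                Finset.sum_add_distrib
            _ ≤ (∏ i ∈ range n, (1 + a i)) + a n * ∏ i ∈ range n, (1 + a i) := by
                gcongr ?_ + ?_
                · rw [← tsum_coeff_eq _ _ (n+1) (le_trans (hdegs n) (by omega))]
                  rw [tsum_coeff_eq _ _ n (hdegs n)] at hS ⊢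
                  exact hS
                · rw [Finset.sum_range_succ' _ (n+1)]
                  simp only [hXcoeff0, norm_zero, mul_zero, add_zero, Nat.cast_zero]
                  have step : ∀ j ∈ range (n+1),
                      ν (((j:ℕ)+1 : ℕ) : ℤ) * (‖α n‖ * ‖(X * Φ n).coeff (j+1)‖)
                      ≤ a n * (ν ((j : ℤ) - (n : ℤ)) * ‖(Φ n).coeff j‖) := by
                    intro j _
                    rw [Polynomial.coeff_X_mul]
                    have hb : ν (((j:ℕ)+1 : ℕ) : ℤ) ≤ ν ((n:ℤ)+1) * ν ((j:ℤ) - (n:ℤ)) := by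
                      have := hνsub ((n:ℤ)+1) ((j:ℤ) - (n:ℤ))
                      have he : ((n:ℤ)+1) + ((j:ℤ) - (n:ℤ)) = (((j:ℕ)+1 : ℕ) : ℤ) := by
                        push_cast; ring
                      rwa [he] at this
                    have hnn : (0:ℝ) ≤ ‖α n‖ * ‖(Φ n).coeff j‖ :=
                      mul_nonneg (norm_nonneg _) (norm_nonneg _)
                    calc ν (((j:ℕ)+1 : ℕ) : ℤ) * (‖α n‖ * ‖(Φ n).coeff j‖)
                        ≤ (ν ((n:ℤ)+1) * ν ((j:ℤ) - (n:ℤ))) * (‖α n‖ * ‖(Φ n).coeff j‖) :=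
                          mul_le_mul_of_nonneg_right hb hnn
                      _ = a n * (ν ((j : ℤ) - (n : ℤ)) * ‖(Φ n).coeff j‖) := by
                          simp only [ha]; ring
                  refine le_trans (Finset.sum_le_sum step) ?_
                  rw [← Finset.mul_sum]
                  refine mul_le_mul_of_nonneg_left ?_ (ha_nonneg n)
                  rw [← hTsum]; exact hT
            _ = ∏ i ∈ range (n+1), (1 + a i) := prodsucc.symm
        · -- Φ bound
          rw [tsum_coeff_eq _ _ (n+1) (hdeg (n+1))]
          push_cast
          have key : ∀ j, ‖(Φ (n+1)).coeff j‖
              ≤ ‖(X * Φ n).coeff j‖ + ‖α n‖ * ‖(Φs n).coeff j‖ := by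
            intro j
            rw [hrec2 n, Polynomial.coeff_sub, Polynomial.coeff_C_mul]
            refine le_trans (norm_sub_le _ _) ?_
            rw [norm_mul, RCLike.norm_conj]
          calc ∑ j ∈ range (n+2), ν ((j : ℤ) - ((n:ℤ)+1)) * ‖(Φ (n+1)).coeff j‖
              ≤ ∑ j ∈ range (n+2), (ν ((j : ℤ) - ((n:ℤ)+1)) * ‖(X * Φ n).coeff j‖
                  + ν ((j : ℤ) - ((n:ℤ)+1)) * (‖α n‖ * ‖(Φs n).coeff j‖)) := by
                refine Finset.sum_le_sum fun j _ => ?_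
                rw [← mul_add]
                exact mul_le_mul_of_nonneg_left (key j) (hνpos ((j : ℤ) - ((n:ℤ)+1))).le
            _ = (∑ j ∈ range (n+2), ν ((j : ℤ) - ((n:ℤ)+1)) * ‖(X * Φ n).coeff j‖)
                + ∑ j ∈ range (n+2), ν ((j : ℤ) - ((n:ℤ)+1)) * (‖α n‖ * ‖(Φs n).coeff j‖) :=
                Finset.sum_add_distrib
            _ ≤ (∏ i ∈ range n, (1 + a i)) + a n * ∏ i ∈ range n, (1 + a i) := by
                gcongr ?_ + ?_
                · rw [Finset.sum_range_succ' _ (n+1)]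
                  simp only [hXcoeff0, norm_zero, mul_zero, add_zero, Nat.cast_zero]
                  have heq : ∀ j ∈ range (n+1),
                      ν ((((j:ℕ)+1 : ℕ) : ℤ) - ((n:ℤ)+1)) * ‖(X * Φ n).coeff (j+1)‖
                      = ν ((j : ℤ) - (n : ℤ)) * ‖(Φ n).coeff j‖ := by
                    intro j _
                    rw [Polynomial.coeff_X_mul]
                    congr 2
                    push_cast; ring
                  rw [Finset.sum_congr rfl heq, ← hTsum]
                  exact hT
                · have step : ∀ j ∈ range (n+2),
                      ν ((j : ℤ) - ((n:ℤ)+1)) * (‖α n‖ * ‖(Φs n).coeff j‖)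
                      ≤ a n * (ν (j : ℤ) * ‖(Φs n).coeff j‖) := by
                    intro j _
                    have hb : ν ((j : ℤ) - ((n:ℤ)+1)) ≤ ν ((n:ℤ)+1) * ν (j : ℤ) := by
                      have h1 := hνsub (-(((n:ℤ))+1)) (j : ℤ)
                      have he : (-(((n:ℤ))+1)) + (j:ℤ) = (j:ℤ) - ((n:ℤ)+1) := by ring
                      rw [he, hνsym] at h1
                      linarith [h1]
                    have hnn : (0:ℝ) ≤ ‖α n‖ * ‖(Φs n).coeff j‖ :=
                      mul_nonneg (norm_nonneg _) (norm_nonneg _)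
                    calc ν ((j : ℤ) - ((n:ℤ)+1)) * (‖α n‖ * ‖(Φs n).coeff j‖)
                        ≤ (ν ((n:ℤ)+1) * ν (j : ℤ)) * (‖α n‖ * ‖(Φs n).coeff j‖) :=
                          mul_le_mul_of_nonneg_right hb hnn
                      _ = a n * (ν (j : ℤ) * ‖(Φs n).coeff j‖) := by
                          simp only [ha]; ring
                  refine le_trans (Finset.sum_le_sum step) ?_
                  rw [← Finset.mul_sum]
                  refine mul_le_mul_of_nonneg_left ?_ (ha_nonneg n)
                  rw [← tsum_coeff_eq (fun k : ℕ => ν (k : ℤ)) (Φs n) (n+1)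
                    (le_trans (hdegs n) (by omega))]
                  exact hS
            _ = ∏ i ∈ range (n+1), (1 + a i) := prodsucc.symm
  intro n
  exact ⟨(main n).1, (main n).2, hexp n⟩
end

section
/- Suppose ν is a Beurling weight and Σ_n ν(n)|α_n| < ∞, where α_n are the Verblunsky coefficients. Then the sequence of reversed monic orthogonal polynomials Φ*_n is Cauchy in the ‖·‖_ν norm; in fact ‖Φ*_n − Φ*_m‖_ν ≤ Σ_{i=m}^{n-1} ν(i+1)|α_i| ‖z^{-i}Φ_i‖_ν for m ≤ n, and hence Φ*_n converges in A_ν^+. -/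
open Polynomial Finset Filter


open Polynomial Finset Filter

private lemma summable_coeff_aux (p : Polynomial ℂ) (g : ℕ → ℝ) :
    Summable (fun j : ℕ => g j * ‖p.coeff j‖) :=
  summable_of_ne_finset_zero (s := p.support) fun j hj => by
    simp [Polynomial.notMem_support_iff.mp hj]

private lemma summable_coeff_sub_aux (p q : Polynomial ℂ) (g : ℕ → ℝ) :
    Summable (fun j : ℕ => g j * ‖p.coeff j - q.coeff j‖) :=
  summable_of_ne_finset_zero (s := p.support ∪ q.support) fun j hj => by
    rw [Finset.mem_union] at hj
    push_neg at hj
    simp [Polynomial.notMem_support_iff.mp hj.1, Polynomial.notMem_support_iff.mp hj.2]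

private lemma tsum_shift_aux (f : ℕ → ℝ) (h0 : f 0 = 0) :
    ∑' k : ℕ, f k = ∑' k : ℕ, f (k + 1) := by
  refine (Function.Injective.tsum_eq (g := fun k : ℕ => k + 1) (fun a b h => by simpa using h) ?_).symm
  intro x hx
  rcases x with _ | x
  · exact absurd h0 hx
  · exact ⟨x, rfl⟩

private lemma step_bound (ν : ℤ → ℝ) (hν1 : ∀ n : ℤ, 1 ≤ ν n)
    (hνsub : ∀ n m : ℤ, ν (n + m) ≤ ν n * ν m)
    (i : ℕ) (a : ℂ) (p : Polynomial ℂ) :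
    (∑' k : ℕ, ν (k : ℤ) * ‖(C a * X * p).coeff k‖) ≤
      ν ((i : ℤ) + 1) * ‖a‖ * ∑' j : ℕ, ν ((j : ℤ) - (i : ℤ)) * ‖p.coeff j‖ := by
  have h0 : ∀ n : ℤ, 0 ≤ ν n := fun n => le_trans zero_le_one (hν1 n)
  have heq : (∑' k : ℕ, ν (k : ℤ) * ‖(C a * X * p).coeff k‖)
      = ∑' j : ℕ, ν ((j : ℤ) + 1) * (‖a‖ * ‖p.coeff j‖) := by
    rw [tsum_shift_aux _ (by simp [Polynomial.mul_coeff_zero])]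
    apply tsum_congr
    intro j
    rw [mul_assoc, Polynomial.coeff_C_mul, Polynomial.coeff_X_mul, norm_mul]
    push_cast
    ring
  rw [heq]
  have hle : ∀ j : ℕ, ν ((j:ℤ)+1) * (‖a‖ * ‖p.coeff j‖) ≤
      ν ((i:ℤ)+1) * ‖a‖ * (ν ((j:ℤ) - (i:ℤ)) * ‖p.coeff j‖) := by
    intro j
    have h1 : ν ((j:ℤ)+1) ≤ ν ((i:ℤ)+1) * ν ((j:ℤ) - (i:ℤ)) := by
      have h2 := hνsub ((i:ℤ)+1) ((j:ℤ) - (i:ℤ))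
      have e : (i:ℤ)+1 + ((j:ℤ) - (i:ℤ)) = (j:ℤ)+1 := by ring
      rwa [e] at h2
    calc ν ((j:ℤ)+1) * (‖a‖ * ‖p.coeff j‖)
        ≤ (ν ((i:ℤ)+1) * ν ((j:ℤ)-(i:ℤ))) * (‖a‖ * ‖p.coeff j‖) := by
          apply mul_le_mul_of_nonneg_right h1 (by positivity)
      _ = ν ((i:ℤ)+1) * ‖a‖ * (ν ((j:ℤ)-(i:ℤ)) * ‖p.coeff j‖) := by ring
  have hsum1 : Summable (fun j : ℕ => ν ((j:ℤ)+1) * (‖a‖ * ‖p.coeff j‖)) :=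
    (summable_coeff_aux p (fun j => ν ((j:ℤ)+1) * ‖a‖)).congr fun j => by ring
  have hsum2 : Summable (fun j : ℕ => ν ((i:ℤ)+1) * ‖a‖ * (ν ((j:ℤ)-(i:ℤ)) * ‖p.coeff j‖)) :=
    (summable_coeff_aux p (fun j => ν ((j:ℤ)-(i:ℤ)))).mul_left _
  calc (∑' j : ℕ, ν ((j:ℤ)+1) * (‖a‖ * ‖p.coeff j‖))
      ≤ ∑' j : ℕ, ν ((i:ℤ)+1) * ‖a‖ * (ν ((j:ℤ)-(i:ℤ)) * ‖p.coeff j‖) :=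
        Summable.tsum_le_tsum hle hsum1 hsum2
    _ = ν ((i:ℤ)+1) * ‖a‖ * ∑' j : ℕ, ν ((j:ℤ)-(i:ℤ)) * ‖p.coeff j‖ := tsum_mul_left

private lemma shiftB_aux (ν : ℤ → ℝ) (s : ℤ) (p : Polynomial ℂ) :
    (∑' j : ℕ, ν ((j:ℤ) - (s+1)) * ‖(X * p).coeff j‖)
      = ∑' j : ℕ, ν ((j:ℤ) - s) * ‖p.coeff j‖ := by
  rw [tsum_shift_aux _ (by simp [Polynomial.mul_coeff_zero])]
  apply tsum_congr
  intro j
  rw [Polynomial.coeff_X_mul]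
  congr 2
  push_cast
  ring

set_option maxHeartbeats 400000 in
private lemma B_step (ν : ℤ → ℝ) (hν1 : ∀ n : ℤ, 1 ≤ ν n)
    (hνsym : ∀ n : ℤ, ν (-n) = ν n)
    (hνsub : ∀ n m : ℤ, ν (n + m) ≤ ν n * ν m)
    (i : ℕ) (a : ℂ) (p q : Polynomial ℂ) :
    (∑' j : ℕ, ν ((j:ℤ) - ((i:ℤ)+1)) * ‖(X * p - C ((starRingEnd ℂ) a) * q).coeff j‖)
      ≤ (∑' j : ℕ, ν ((j:ℤ) - (i:ℤ)) * ‖p.coeff j‖)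
        + ν ((i:ℤ)+1) * ‖a‖ * (∑' k : ℕ, ν (k:ℤ) * ‖q.coeff k‖) := by
  have h0 : ∀ n : ℤ, 0 ≤ ν n := fun n => le_trans zero_le_one (hν1 n)
  have hs1 : Summable (fun j : ℕ => ν ((j:ℤ) - ((i:ℤ)+1)) * ‖(X * p).coeff j‖) :=
    summable_coeff_aux (X * p) (fun j => ν ((j:ℤ) - ((i:ℤ)+1)))
  have hs2 : Summable (fun j : ℕ => ν ((j:ℤ) - ((i:ℤ)+1)) * (‖a‖ * ‖q.coeff j‖)) :=
    (summable_coeff_aux q (fun j => ν ((j:ℤ) - ((i:ℤ)+1)) * ‖a‖)).congr fun j => by ring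
  have tri : ∀ j : ℕ, ν ((j:ℤ) - ((i:ℤ)+1)) * ‖(X * p - C ((starRingEnd ℂ) a) * q).coeff j‖
      ≤ ν ((j:ℤ) - ((i:ℤ)+1)) * ‖(X * p).coeff j‖
        + ν ((j:ℤ) - ((i:ℤ)+1)) * (‖a‖ * ‖q.coeff j‖) := by
    intro j
    rw [← mul_add]
    refine mul_le_mul_of_nonneg_left ?_ (h0 _)
    rw [Polynomial.coeff_sub, Polynomial.coeff_C_mul]
    refine (norm_sub_le _ _).trans (le_of_eq ?_)
    rw [norm_mul, starRingEnd_apply, norm_star]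
  have shift : (∑' j : ℕ, ν ((j:ℤ) - ((i:ℤ)+1)) * ‖(X * p).coeff j‖)
      = ∑' j : ℕ, ν ((j:ℤ) - (i:ℤ)) * ‖p.coeff j‖ := by
    rw [tsum_shift_aux _ (by simp [Polynomial.mul_coeff_zero])]
    apply tsum_congr
    intro j
    rw [Polynomial.coeff_X_mul]
    congr 2
    push_cast
    ring
  have second : (∑' j : ℕ, ν ((j:ℤ) - ((i:ℤ)+1)) * (‖a‖ * ‖q.coeff j‖))
      ≤ ν ((i:ℤ)+1) * ‖a‖ * (∑' k : ℕ, ν (k:ℤ) * ‖q.coeff k‖) := by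
    have hle2 : ∀ j : ℕ, ν ((j:ℤ) - ((i:ℤ)+1)) * (‖a‖ * ‖q.coeff j‖)
        ≤ ν ((i:ℤ)+1) * ‖a‖ * (ν (j:ℤ) * ‖q.coeff j‖) := by
      intro j
      have h1 : ν ((j:ℤ) - ((i:ℤ)+1)) ≤ ν (j:ℤ) * ν ((i:ℤ)+1) := by
        have h2 := hνsub (j:ℤ) (-((i:ℤ)+1))
        rw [hνsym ((i:ℤ)+1)] at h2
        have e : (j:ℤ) + -((i:ℤ)+1) = (j:ℤ) - ((i:ℤ)+1) := by ring
        rwa [e] at h2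
      calc ν ((j:ℤ) - ((i:ℤ)+1)) * (‖a‖ * ‖q.coeff j‖)
          ≤ (ν (j:ℤ) * ν ((i:ℤ)+1)) * (‖a‖ * ‖q.coeff j‖) :=
            mul_le_mul_of_nonneg_right h1 (by positivity)
        _ = ν ((i:ℤ)+1) * ‖a‖ * (ν (j:ℤ) * ‖q.coeff j‖) := by ring
    calc (∑' j : ℕ, ν ((j:ℤ) - ((i:ℤ)+1)) * (‖a‖ * ‖q.coeff j‖))
        ≤ ∑' j : ℕ, ν ((i:ℤ)+1) * ‖a‖ * (ν (j:ℤ) * ‖q.coeff j‖) :=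
          Summable.tsum_le_tsum hle2 hs2 ((summable_coeff_aux q (fun j => ν (j:ℤ))).mul_left _)
      _ = ν ((i:ℤ)+1) * ‖a‖ * ∑' j : ℕ, ν (j:ℤ) * ‖q.coeff j‖ := tsum_mul_left
  have hs0 : Summable (fun j : ℕ =>
      ν ((j:ℤ) - ((i:ℤ)+1)) * ‖(X * p - C ((starRingEnd ℂ) a) * q).coeff j‖) :=
    summable_coeff_aux (X * p - C ((starRingEnd ℂ) a) * q) (fun j => ν ((j:ℤ) - ((i:ℤ)+1)))
  refine le_trans (Summable.tsum_le_tsum tri hs0 (hs1.add hs2)) ?_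
  rw [Summable.tsum_add hs1 hs2, shift]
  exact add_le_add le_rfl second

private lemma S_step (ν : ℤ → ℝ) (hν1 : ∀ n : ℤ, 1 ≤ ν n)
    (hνsub : ∀ n m : ℤ, ν (n + m) ≤ ν n * ν m)
    (i : ℕ) (a : ℂ) (p q : Polynomial ℂ) :
    (∑' k : ℕ, ν (k:ℤ) * ‖(p - C a * X * q).coeff k‖)
      ≤ (∑' k : ℕ, ν (k:ℤ) * ‖p.coeff k‖)
        + ν ((i:ℤ)+1) * ‖a‖ * ∑' j : ℕ, ν ((j:ℤ) - (i:ℤ)) * ‖q.coeff j‖ := by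
  have h0 : ∀ n : ℤ, 0 ≤ ν n := fun n => le_trans zero_le_one (hν1 n)
  have hs1 : Summable (fun k : ℕ => ν (k:ℤ) * ‖p.coeff k‖) :=
    summable_coeff_aux p (fun k => ν (k:ℤ))
  have hs2 : Summable (fun k : ℕ => ν (k:ℤ) * ‖(C a * X * q).coeff k‖) :=
    summable_coeff_aux (C a * X * q) (fun k => ν (k:ℤ))
  have hs0 : Summable (fun k : ℕ => ν (k:ℤ) * ‖(p - C a * X * q).coeff k‖) :=
    summable_coeff_aux (p - C a * X * q) (fun k => ν (k:ℤ))
  have tri : ∀ k : ℕ, ν (k:ℤ) * ‖(p - C a * X * q).coeff k‖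
      ≤ ν (k:ℤ) * ‖p.coeff k‖ + ν (k:ℤ) * ‖(C a * X * q).coeff k‖ := by
    intro k
    rw [← mul_add, Polynomial.coeff_sub]
    exact mul_le_mul_of_nonneg_left (norm_sub_le _ _) (h0 _)
  refine le_trans (Summable.tsum_le_tsum tri hs0 (hs1.add hs2)) ?_
  rw [Summable.tsum_add hs1 hs2]
  exact add_le_add le_rfl (step_bound ν hν1 hνsub i a q)

private lemma diff_step (ν : ℤ → ℝ) (hν1 : ∀ n : ℤ, 1 ≤ ν n)
    (hνsub : ∀ n m : ℤ, ν (n + m) ≤ ν n * ν m)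
    (i : ℕ) (a : ℂ) (p q : Polynomial ℂ) :
    (∑' k : ℕ, ν (k:ℤ) * ‖(p - C a * X * q).coeff k - p.coeff k‖)
      ≤ ν ((i:ℤ)+1) * ‖a‖ * ∑' j : ℕ, ν ((j:ℤ) - (i:ℤ)) * ‖q.coeff j‖ := by
  refine le_trans (le_of_eq (tsum_congr fun k => ?_)) (step_bound ν hν1 hνsub i a q)
  rw [Polynomial.coeff_sub, sub_sub_cancel_left, norm_neg]

set_option maxHeartbeats 1000000 in
/-- If `Σ_n ν(n)|α_n| < ∞`, the reversed monic orthogonal polynomials `Φ*_n`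
form a Cauchy sequence in the `‖·‖_ν` norm, with the explicit estimate
`‖Φ*_n − Φ*_m‖_ν ≤ Σ_{i=m}^{n-1} ν(i+1)|α_i| ‖z^{-i}Φ_i‖_ν`, and hence
converge in `A_ν^+`. -/
theorem monic_opuc_reversed_cauchy (ν : ℤ → ℝ)
    (hν0 : ν 0 = 1)
    (hν1 : ∀ n : ℤ, 1 ≤ ν n)
    (hνsym : ∀ n : ℤ, ν (-n) = ν n)
    (hνsub : ∀ n m : ℤ, ν (n + m) ≤ ν n * ν m)
    (α : ℕ → ℂ) (hαlt : ∀ n, ‖α n‖ < 1)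
    (hα : Summable fun n : ℕ => ν (n : ℤ) * ‖α n‖)
    (Φ Φs : ℕ → Polynomial ℂ)
    (hΦ0 : Φ 0 = 1) (hΦs0 : Φs 0 = 1)
    (hdeg : ∀ n, (Φ n).natDegree ≤ n)
    (hdegs : ∀ n, (Φs n).natDegree ≤ n)
    (hrec1 : ∀ n, Φs (n + 1) = Φs n - C (α n) * X * Φ n)
    (hrec2 : ∀ n, Φ (n + 1) = X * Φ n - C ((starRingEnd ℂ) (α n)) * Φs n) :
    (∀ m n : ℕ, m ≤ n →
      (∑' k : ℕ, ν (k : ℤ) * ‖(Φs n).coeff k - (Φs m).coeff k‖) ≤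
        ∑ i ∈ Finset.Ico m n,
          ν ((i : ℤ) + 1) * ‖α i‖ *
            (∑' j : ℕ, ν ((j : ℤ) - (i : ℤ)) * ‖(Φ i).coeff j‖)) ∧
    (∀ ε : ℝ, 0 < ε → ∃ N : ℕ, ∀ m n : ℕ, N ≤ m → N ≤ n →
      (∑' k : ℕ, ν (k : ℤ) * ‖(Φs n).coeff k - (Φs m).coeff k‖) < ε) ∧
    (∃ f : ℕ → ℂ, Summable (fun k : ℕ => ν (k : ℤ) * ‖f k‖) ∧
      Tendsto (fun n : ℕ => ∑' k : ℕ, ν (k : ℤ) * ‖(Φs n).coeff k - f k‖)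
        atTop (nhds 0)) := by
  classical
  have h0 : ∀ n : ℤ, 0 ≤ ν n := fun n => le_trans zero_le_one (hν1 n)
  -- per-step estimate
  have hE2 : ∀ i : ℕ, (∑' k : ℕ, ν (k : ℤ) * ‖(Φs (i+1)).coeff k - (Φs i).coeff k‖) ≤
      ν ((i:ℤ)+1) * ‖α i‖ * (∑' j : ℕ, ν ((j:ℤ) - (i:ℤ)) * ‖(Φ i).coeff j‖) := by
    intro i
    rw [hrec1 i]
    exact diff_step ν hν1 hνsub i (α i) (Φs i) (Φ i)
  -- Part 1
  have part1 : ∀ m n : ℕ, m ≤ n →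
      (∑' k : ℕ, ν (k : ℤ) * ‖(Φs n).coeff k - (Φs m).coeff k‖) ≤
        ∑ i ∈ Finset.Ico m n,
          ν ((i : ℤ) + 1) * ‖α i‖ *
            (∑' j : ℕ, ν ((j : ℤ) - (i : ℤ)) * ‖(Φ i).coeff j‖) := by
    intro m n hmn
    induction n, hmn using Nat.le_induction with
    | base => simp
    | succ n hmn ih =>
      rw [Finset.sum_Ico_succ_top hmn]
      have tri : ∀ k : ℕ, ν (k:ℤ) * ‖(Φs (n+1)).coeff k - (Φs m).coeff k‖ ≤
          ν (k:ℤ) * ‖(Φs n).coeff k - (Φs m).coeff k‖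
            + ν (k:ℤ) * ‖(Φs (n+1)).coeff k - (Φs n).coeff k‖ := by
        intro k
        rw [← mul_add]
        refine mul_le_mul_of_nonneg_left ?_ (h0 _)
        refine le_trans (le_of_eq ?_) (norm_add_le ((Φs n).coeff k - (Φs m).coeff k)
          ((Φs (n+1)).coeff k - (Φs n).coeff k))
        congr 1
        ring
      have hs1 : Summable (fun k : ℕ => ν (k:ℤ) * ‖(Φs n).coeff k - (Φs m).coeff k‖) :=
        summable_coeff_sub_aux (Φs n) (Φs m) (fun k => ν (k:ℤ))
      have hs2 : Summable (fun k : ℕ => ν (k:ℤ) * ‖(Φs (n+1)).coeff k - (Φs n).coeff k‖) :=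
        summable_coeff_sub_aux (Φs (n+1)) (Φs n) (fun k => ν (k:ℤ))
      have hs0 : Summable (fun k : ℕ => ν (k:ℤ) * ‖(Φs (n+1)).coeff k - (Φs m).coeff k‖) :=
        summable_coeff_sub_aux (Φs (n+1)) (Φs m) (fun k => ν (k:ℤ))
      have t1 : (∑' k : ℕ, ν (k:ℤ) * ‖(Φs (n+1)).coeff k - (Φs m).coeff k‖)
          ≤ (∑' k : ℕ, ν (k:ℤ) * ‖(Φs n).coeff k - (Φs m).coeff k‖)
            + ∑' k : ℕ, ν (k:ℤ) * ‖(Φs (n+1)).coeff k - (Φs n).coeff k‖ := by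
        refine le_trans (Summable.tsum_le_tsum tri hs0 (hs1.add hs2)) ?_
        rw [Summable.tsum_add hs1 hs2]
      linarith [hE2 n, ih, t1]
  -- summability of the coefficient series
  have hcs : Summable (fun i : ℕ => ν ((i:ℤ)+1) * ‖α i‖) := by
    refine Summable.of_nonneg_of_le (fun i => mul_nonneg (h0 _) (norm_nonneg _))
      (fun i => ?_) (hα.mul_left (ν 1))
    have h1 : ν ((i:ℤ)+1) ≤ ν (i:ℤ) * ν 1 := hνsub (i:ℤ) 1
    have h2 : ν ((i:ℤ)+1) * ‖α i‖ ≤ (ν (i:ℤ) * ν 1) * ‖α i‖ :=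
      mul_le_mul_of_nonneg_right h1 (norm_nonneg _)
    linarith [h2, (by ring : (ν (i:ℤ) * ν 1) * ‖α i‖ = ν 1 * (ν (i:ℤ) * ‖α i‖))]
  -- uniform bounds by induction
  have hSB : ∀ i : ℕ,
      (∑' k : ℕ, ν (k:ℤ) * ‖(Φs i).coeff k‖)
          ≤ Real.exp (∑ j ∈ Finset.range i, ν ((j:ℤ)+1) * ‖α j‖)
      ∧ (∑' j : ℕ, ν ((j:ℤ) - (i:ℤ)) * ‖(Φ i).coeff j‖)
          ≤ Real.exp (∑ j ∈ Finset.range i, ν ((j:ℤ)+1) * ‖α j‖) := by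
    intro i
    induction i with
    | zero =>
      constructor
      · rw [hΦs0, tsum_eq_single 0 (fun k hk => by simp [Polynomial.coeff_one, hk])]
        simp [hν0]
      · rw [hΦ0, tsum_eq_single 0 (fun k hk => by simp [Polynomial.coeff_one, hk])]
        simp [hν0]
    | succ i ih =>
      obtain ⟨ihS, ihB⟩ := ih
      have hEpos : (0:ℝ) < Real.exp (∑ j ∈ Finset.range i, ν ((j:ℤ)+1) * ‖α j‖) :=
        Real.exp_pos _
      have hcnn : 0 ≤ ν ((i:ℤ)+1) * ‖α i‖ := mul_nonneg (h0 _) (norm_nonneg _)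
      have hkey : Real.exp (∑ j ∈ Finset.range i, ν ((j:ℤ)+1) * ‖α j‖)
            + ν ((i:ℤ)+1) * ‖α i‖ * Real.exp (∑ j ∈ Finset.range i, ν ((j:ℤ)+1) * ‖α j‖)
          ≤ Real.exp (∑ j ∈ Finset.range (i+1), ν ((j:ℤ)+1) * ‖α j‖) := by
        rw [Finset.sum_range_succ, Real.exp_add]
        have h1 := Real.add_one_le_exp (ν ((i:ℤ)+1) * ‖α i‖)
        nlinarith [hEpos, h1]
      have hSstep : (∑' k : ℕ, ν (k:ℤ) * ‖(Φs (i+1)).coeff k‖)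
          ≤ (∑' k : ℕ, ν (k:ℤ) * ‖(Φs i).coeff k‖)
            + ν ((i:ℤ)+1) * ‖α i‖ * (∑' j : ℕ, ν ((j:ℤ) - (i:ℤ)) * ‖(Φ i).coeff j‖) := by
        rw [hrec1 i]
        exact S_step ν hν1 hνsub i (α i) (Φs i) (Φ i)
      have hBstep : (∑' j : ℕ, ν ((j:ℤ) - ((i+1 : ℕ):ℤ)) * ‖(Φ (i+1)).coeff j‖)
          ≤ (∑' j : ℕ, ν ((j:ℤ) - (i:ℤ)) * ‖(Φ i).coeff j‖)
            + ν ((i:ℤ)+1) * ‖α i‖ * (∑' k : ℕ, ν (k:ℤ) * ‖(Φs i).coeff k‖) := by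
        rw [hrec2 i]
        have hcast : ((i+1 : ℕ):ℤ) = (i:ℤ)+1 := by push_cast; ring
        rw [hcast]
        exact B_step ν hν1 hνsym hνsub i (α i) (Φ i) (Φs i)
      constructor
      · linarith [hSstep, ihS, mul_le_mul_of_nonneg_left ihB hcnn, hkey]
      · linarith [hBstep, ihB, mul_le_mul_of_nonneg_left ihS hcnn, hkey]
  set M : ℝ := Real.exp (∑' i : ℕ, ν ((i:ℤ)+1) * ‖α i‖) with hMdef
  have hMpos : 0 < M := Real.exp_pos _
  have hM : ∀ i : ℕ,
      (∑' k : ℕ, ν (k:ℤ) * ‖(Φs i).coeff k‖) ≤ M ∧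
      (∑' j : ℕ, ν ((j:ℤ) - (i:ℤ)) * ‖(Φ i).coeff j‖) ≤ M := by
    intro i
    have hle : (∑ j ∈ Finset.range i, ν ((j:ℤ)+1) * ‖α j‖) ≤ ∑' j : ℕ, ν ((j:ℤ)+1) * ‖α j‖ :=
      Summable.sum_le_tsum _ (fun j _ => mul_nonneg (h0 _) (norm_nonneg _)) hcs
    have hexp := Real.exp_le_exp.mpr hle
    exact ⟨le_trans (hSB i).1 hexp, le_trans (hSB i).2 hexp⟩
  -- Part 2
  have part2 : ∀ ε : ℝ, 0 < ε → ∃ N : ℕ, ∀ m n : ℕ, N ≤ m → N ≤ n →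
      (∑' k : ℕ, ν (k : ℤ) * ‖(Φs n).coeff k - (Φs m).coeff k‖) < ε := by
    intro ε hε
    have hcauchy : CauchySeq (fun n => ∑ i ∈ Finset.range n, ν ((i:ℤ)+1) * ‖α i‖) :=
      hcs.hasSum.tendsto_sum_nat.cauchySeq
    obtain ⟨N, hN⟩ := Metric.cauchySeq_iff.mp hcauchy (ε / M) (div_pos hε hMpos)
    refine ⟨N, ?_⟩
    have key : ∀ m n : ℕ, N ≤ m → m ≤ n →
        (∑' k : ℕ, ν (k : ℤ) * ‖(Φs n).coeff k - (Φs m).coeff k‖) < ε := by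
      intro m n hNm hmn
      have hNn : N ≤ n := le_trans hNm hmn
      have t1 := part1 m n hmn
      have t2 : (∑ i ∈ Finset.Ico m n, ν ((i:ℤ)+1) * ‖α i‖ *
            (∑' j : ℕ, ν ((j:ℤ)-(i:ℤ)) * ‖(Φ i).coeff j‖))
          ≤ ∑ i ∈ Finset.Ico m n, ν ((i:ℤ)+1) * ‖α i‖ * M :=
        Finset.sum_le_sum fun i _ =>
          mul_le_mul_of_nonneg_left (hM i).2 (mul_nonneg (h0 _) (norm_nonneg _))
      have t3 : (∑ i ∈ Finset.Ico m n, ν ((i:ℤ)+1) * ‖α i‖ * M)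
          = (∑ i ∈ Finset.Ico m n, ν ((i:ℤ)+1) * ‖α i‖) * M := by rw [Finset.sum_mul]
      have t4 : (∑ i ∈ Finset.Ico m n, ν ((i:ℤ)+1) * ‖α i‖)
          ≤ dist (∑ i ∈ Finset.range n, ν ((i:ℤ)+1) * ‖α i‖)
              (∑ i ∈ Finset.range m, ν ((i:ℤ)+1) * ‖α i‖) := by
        rw [Finset.sum_Ico_eq_sub _ hmn, Real.dist_eq]
        exact le_abs_self _
      have t5 := hN n hNn m hNm
      have t6 : dist (∑ i ∈ Finset.range n, ν ((i:ℤ)+1) * ‖α i‖)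
            (∑ i ∈ Finset.range m, ν ((i:ℤ)+1) * ‖α i‖) * M < (ε / M) * M :=
        mul_lt_mul_of_pos_right t5 hMpos
      have t7 : (ε / M) * M = ε := div_mul_cancel₀ ε hMpos.ne'
      nlinarith [t1, t2, t3, t4, t6, t7, hMpos]
    intro m n hm hn
    rcases le_total m n with h | h
    · exact key m n hm h
    · have heq : (∑' k : ℕ, ν (k : ℤ) * ‖(Φs n).coeff k - (Φs m).coeff k‖)
          = ∑' k : ℕ, ν (k : ℤ) * ‖(Φs m).coeff k - (Φs n).coeff k‖ :=
        tsum_congr fun k => by rw [norm_sub_rev]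
      rw [heq]
      exact key n m hn h
  refine ⟨part1, part2, ?_⟩
  -- Part 3
  have hcoefflim : ∀ k : ℕ, ∃ L : ℂ, Tendsto (fun n => (Φs n).coeff k) atTop (nhds L) := by
    intro k
    apply cauchySeq_tendsto_of_complete
    rw [Metric.cauchySeq_iff]
    intro ε hε
    obtain ⟨N, hN⟩ := part2 ε hε
    refine ⟨N, fun m hm n hn => ?_⟩
    have d1 : dist ((Φs m).coeff k) ((Φs n).coeff k)
        = ‖(Φs m).coeff k - (Φs n).coeff k‖ := dist_eq_norm _ _
    have d2 : ‖(Φs m).coeff k - (Φs n).coeff k‖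
        ≤ ν (k:ℤ) * ‖(Φs m).coeff k - (Φs n).coeff k‖ :=
      le_mul_of_one_le_left (norm_nonneg _) (hν1 _)
    have d3 : ν (k:ℤ) * ‖(Φs m).coeff k - (Φs n).coeff k‖
        ≤ ∑' k' : ℕ, ν (k':ℤ) * ‖(Φs m).coeff k' - (Φs n).coeff k'‖ :=
      Summable.le_tsum (summable_coeff_sub_aux (Φs m) (Φs n) (fun k' => ν (k':ℤ))) k
        (fun j _ => mul_nonneg (h0 _) (norm_nonneg _))
    have d4 := hN n m hn hm
    rw [d1]
    linarith
  choose f hf using hcoefflim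
  have hfs : Summable (fun k : ℕ => ν (k:ℤ) * ‖f k‖) := by
    refine summable_of_sum_range_le (c := M)
      (fun k => mul_nonneg (h0 _) (norm_nonneg _)) (fun n => ?_)
    have htend : Tendsto (fun m => ∑ k ∈ Finset.range n, ν (k:ℤ) * ‖(Φs m).coeff k‖) atTop
        (nhds (∑ k ∈ Finset.range n, ν (k:ℤ) * ‖f k‖)) :=
      tendsto_finset_sum _ fun k _ => ((hf k).norm).const_mul _
    refine le_of_tendsto htend (Eventually.of_forall fun m => ?_)
    refine le_trans ?_ (hM m).1
    exact Summable.sum_le_tsum _ (fun k _ => mul_nonneg (h0 _) (norm_nonneg _))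
      (summable_coeff_aux (Φs m) (fun k => ν (k:ℤ)))
  refine ⟨f, hfs, ?_⟩
  rw [Metric.tendsto_atTop]
  intro ε hε
  obtain ⟨N, hN⟩ := part2 (ε/2) (half_pos hε)
  refine ⟨N, fun n hn => ?_⟩
  have hsum_n : Summable (fun k : ℕ => ν (k:ℤ) * ‖(Φs n).coeff k - f k‖) := by
    refine Summable.of_nonneg_of_le (fun k => mul_nonneg (h0 _) (norm_nonneg _)) (fun k => ?_)
      ((summable_coeff_aux (Φs n) (fun k => ν (k:ℤ))).add hfs)
    have := mul_le_mul_of_nonneg_left (norm_sub_le ((Φs n).coeff k) (f k)) (h0 (k:ℤ))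
    linarith [this, (by ring : ν (k:ℤ) * (‖(Φs n).coeff k‖ + ‖f k‖)
      = ν (k:ℤ) * ‖(Φs n).coeff k‖ + ν (k:ℤ) * ‖f k‖)]
  have hle : (∑' k : ℕ, ν (k:ℤ) * ‖(Φs n).coeff k - f k‖) ≤ ε/2 := by
    refine Summable.tsum_le_of_sum_le hsum_n fun F => ?_
    have htend : Tendsto (fun m => ∑ k ∈ F, ν (k:ℤ) * ‖(Φs n).coeff k - (Φs m).coeff k‖) atTop
        (nhds (∑ k ∈ F, ν (k:ℤ) * ‖(Φs n).coeff k - f k‖)) :=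
      tendsto_finset_sum _ fun k _ => ((tendsto_const_nhds.sub (hf k)).norm).const_mul _
    refine le_of_tendsto htend ?_
    filter_upwards [eventually_ge_atTop N] with m hm
    refine le_trans (Summable.sum_le_tsum F (fun k _ => mul_nonneg (h0 _) (norm_nonneg _))
      (summable_coeff_sub_aux (Φs n) (Φs m) (fun k => ν (k:ℤ)))) ?_
    exact (hN m n hm hn).le
  have hnn : 0 ≤ ∑' k : ℕ, ν (k:ℤ) * ‖(Φs n).coeff k - f k‖ :=
    tsum_nonneg fun k => mul_nonneg (h0 _) (norm_nonneg _)
  rw [Real.dist_eq, sub_zero, abs_of_nonneg hnn]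
  linarith
end
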